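/- For every finite K ⊆ ℕ and every K-symmetric relation ρ ⊆ I × I, there exist a finite set K' ⊆ ℕ and a K'-symmetric relation σ ⊆ I × I such that for every ξ ∈ I: if there exists η ∈ I with (ξ, η) ∈ ρ, then there exists exactly one η ∈ I with (ξ, η) ∈ ρ and (ξ, η) ∈ σ. (This is the combinatorial core of the fact that the Zermelo-Asser axiom AC^{1,1} holds in the permutation model Σ₂.) -/
import Mathlib


/-- Membership in the group `𝔊` of automorphisms underlying the permutation model `Σ₂`:
permutations of `I = ℕ × Fin 2` acting by a permutation of `ℕ` together with, for each
`n`, a permutation of the pair `{n} × Fin 2`. -/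
def InG (π : Equiv.Perm (ℕ × Fin 2)) : Prop :=
  ∃ (φ : Equiv.Perm ℕ) (πn : ℕ → Equiv.Perm (Fin 2)),
    ∀ (n : ℕ) (m : Fin 2), π (n, m) = (φ n, πn n m)

/-- `π` fixes every point of `K × Fin 2`. -/
def FixesK (π : Equiv.Perm (ℕ × Fin 2)) (K : Set ℕ) : Prop :=
  ∀ ξ : ℕ × Fin 2, ξ.1 ∈ K → π ξ = ξ

/-- `δ ⊆ I` is `K`-symmetric: `π '' δ = δ` for every `π ∈ 𝔊` fixing `K × Fin 2` pointwise. -/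
def SymmSet (K : Set ℕ) (δ : Set (ℕ × Fin 2)) : Prop :=
  ∀ π : Equiv.Perm (ℕ × Fin 2), InG π → FixesK π K → π '' δ = δ

/-- `ρ ⊆ I × I` is `K`-symmetric: for every `π ∈ 𝔊` fixing `K × Fin 2` pointwise,
`(π ξ, π η) ∈ ρ ↔ (ξ, η) ∈ ρ`. -/
def SymmRel (K : Set ℕ) (ρ : Set ((ℕ × Fin 2) × (ℕ × Fin 2))) : Prop :=
  ∀ π : Equiv.Perm (ℕ × Fin 2), InG π → FixesK π K →
    ∀ ξ η : ℕ × Fin 2, ((π ξ, π η) ∈ ρ ↔ (ξ, η) ∈ ρ)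

lemma fin2_eq : ∀ m m' : Fin 2, m' = m ∨ m' = m + 1 := by decide

lemma fin2_add (e : Equiv.Perm (Fin 2)) (m : Fin 2) : e (m + 1) = e m + 1 := by
  have hne : e 0 ≠ e 1 := fun h => by simpa using e.injective h
  have key : ∀ x y : Fin 2, x ≠ y → y = x + 1 := by decide
  have h01 : ∀ m : Fin 2, m = 0 ∨ m = 1 := by decide
  rcases h01 m with rfl | rfl
  · show e 1 = e 0 + 1
    exact key _ _ hne
  · show e 0 = e 1 + 1
    exact key _ _ (Ne.symm hne)

/-- A `𝔊`-element swapping columns `n, n'` (together with matching in-column swaps). -/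
def swapPerm (n n' : ℕ) (m m' : Fin 2) : Equiv.Perm (ℕ × Fin 2) :=
  Equiv.prodShear (Equiv.swap n n')
    (fun k => if k = n ∨ k = n' then Equiv.swap m m' else 1)

lemma swapPerm_inG (n n' : ℕ) (m m' : Fin 2) : InG (swapPerm n n' m m') :=
  ⟨Equiv.swap n n', fun k => if k = n ∨ k = n' then Equiv.swap m m' else 1,
    fun _ _ => rfl⟩

lemma swapPerm_apply_of_ne {n n' k : ℕ} (m m' : Fin 2) (mm : Fin 2)
    (h1 : k ≠ n) (h2 : k ≠ n') : swapPerm n n' m m' (k, mm) = (k, mm) := by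
  simp [swapPerm, Equiv.prodShear, Equiv.swap_apply_of_ne_of_ne h1 h2, h1, h2]

lemma swapPerm_apply_left (n n' : ℕ) (m m' : Fin 2) :
    swapPerm n n' m m' (n, m) = (n', m') := by
  simp [swapPerm, Equiv.prodShear]

/-- Transport: if `(ξ,η) ∈ ρ` with `η` outside `K × Fin 2` and outside column `ξ.1`,
then the same holds for any other such `η'`. -/
lemma move {K : Set ℕ} {ρ : Set ((ℕ × Fin 2) × (ℕ × Fin 2))} (hρ : SymmRel K ρ)
    {ξ η η' : ℕ × Fin 2} (hη : η.1 ∉ K) (hη' : η'.1 ∉ K)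
    (h1 : η.1 ≠ ξ.1) (h2 : η'.1 ≠ ξ.1) (hmem : (ξ, η) ∈ ρ) : (ξ, η') ∈ ρ := by
  set π := swapPerm η.1 η'.1 η.2 η'.2 with hπdef
  have hfix : FixesK π K := by
    intro ζ hζ
    have e1 : ζ.1 ≠ η.1 := fun h => hη (h ▸ hζ)
    have e2 : ζ.1 ≠ η'.1 := fun h => hη' (h ▸ hζ)
    exact swapPerm_apply_of_ne _ _ _ e1 e2
  have hξ : π ξ = ξ := swapPerm_apply_of_ne _ _ _ (Ne.symm h1) (Ne.symm h2)
  have hη2 : π η = η' := swapPerm_apply_left _ _ _ _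
  have := (hρ π (swapPerm_inG _ _ _ _) hfix ξ η)
  rw [hξ, hη2] at this
  exact this.mpr hmem

open Classical in
/-- Pick an element of a set (default junk if empty). -/
noncomputable def pick (S : Set (ℕ × Fin 2)) : ℕ × Fin 2 :=
  if h : S.Nonempty then h.some else (0, 0)

lemma pick_mem {S : Set (ℕ × Fin 2)} (h : S.Nonempty) : pick S ∈ S := by
  rw [pick, dif_pos h]; exact h.some_mem

open Classical in
/-- The canonical choice function. -/
noncomputable def ch (K : Set ℕ) (ρ : Set ((ℕ × Fin 2) × (ℕ × Fin 2))) (a b : ℕ)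
    (ξ : ℕ × Fin 2) : ℕ × Fin 2 :=
  if {η | (ξ, η) ∈ ρ ∧ η.1 ∈ K}.Nonempty then pick {η | (ξ, η) ∈ ρ ∧ η.1 ∈ K}
  else if (ξ, ξ) ∈ ρ then ξ
  else if (ξ, (ξ.1, ξ.2 + 1)) ∈ ρ then (ξ.1, ξ.2 + 1)
  else if ξ.1 = a then (b, 0) else (a, 0)

lemma ch_mem {K : Set ℕ} {ρ : Set ((ℕ × Fin 2) × (ℕ × Fin 2))} (hρ : SymmRel K ρ)
    {a b : ℕ} (ha : a ∉ K) (hb : b ∉ K) (hab : a ≠ b) {ξ : ℕ × Fin 2}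
    (hex : ∃ η, (ξ, η) ∈ ρ) : (ξ, ch K ρ a b ξ) ∈ ρ := by
  classical
  rw [ch]
  by_cases hS : {η | (ξ, η) ∈ ρ ∧ η.1 ∈ K}.Nonempty
  · rw [if_pos hS]; exact (pick_mem hS).1
  · rw [if_neg hS]
    by_cases h2 : (ξ, ξ) ∈ ρ
    · rw [if_pos h2]; exact h2
    · rw [if_neg h2]
      by_cases h3 : (ξ, (ξ.1, ξ.2 + 1)) ∈ ρ
      · rw [if_pos h3]; exact h3
      · rw [if_neg h3]
        obtain ⟨η₀, hη₀⟩ := hex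
        have hη₀K : η₀.1 ∉ K := fun h => hS ⟨η₀, hη₀, h⟩
        have hne : η₀.1 ≠ ξ.1 := by
          intro h
          rcases fin2_eq ξ.2 η₀.2 with h' | h'
          · exact h2 (by rwa [show η₀ = ξ from Prod.ext h h'] at hη₀)
          · exact h3 (by rwa [show η₀ = (ξ.1, ξ.2 + 1) from Prod.ext h h'] at hη₀)
        by_cases h4 : ξ.1 = a
        · rw [if_pos h4]
          exact move hρ hη₀K hb hne (by rw [← h4] at hab; exact fun h => hab h.symm) hη₀
        · rw [if_neg h4]
          exact move hρ hη₀K ha hne (fun h => h4 h.symm) hη₀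

lemma ch_equiv {K : Set ℕ} {ρ : Set ((ℕ × Fin 2) × (ℕ × Fin 2))} (hρ : SymmRel K ρ)
    {a b : ℕ} (π : Equiv.Perm (ℕ × Fin 2)) (hπ : InG π)
    (hfix : FixesK π (K ∪ {a, b})) (ξ : ℕ × Fin 2) :
    ch K ρ a b (π ξ) = π (ch K ρ a b ξ) := by
  classical
  obtain ⟨φ, πn, hπeq⟩ := hπ
  have hGπ : InG π := ⟨φ, πn, hπeq⟩
  have hπapp : ∀ ζ : ℕ × Fin 2, π ζ = (φ ζ.1, πn ζ.1 ζ.2) := fun ζ => hπeq ζ.1 ζ.2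
  have hfixK : FixesK π K := fun ζ h => hfix ζ (Or.inl h)
  have hset : {η | (π ξ, η) ∈ ρ ∧ η.1 ∈ K} = {η | (ξ, η) ∈ ρ ∧ η.1 ∈ K} := by
    ext η
    simp only [Set.mem_setOf_eq]
    constructor
    · rintro ⟨h, hK2⟩
      exact ⟨(hρ π hGπ hfixK ξ η).mp (by rwa [hfixK η hK2]), hK2⟩
    · rintro ⟨h, hK2⟩
      refine ⟨?_, hK2⟩
      have := (hρ π hGπ hfixK ξ η).mpr h
      rwa [hfixK η hK2] at this
  rw [ch, ch, hset]
  by_cases hS : {η | (ξ, η) ∈ ρ ∧ η.1 ∈ K}.Nonempty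
  · rw [if_pos hS, if_pos hS, hfixK _ (pick_mem hS).2]
  · rw [if_neg hS, if_neg hS]
    have hiff2 : ((π ξ, π ξ) ∈ ρ) ↔ (ξ, ξ) ∈ ρ := hρ π hGπ hfixK ξ ξ
    by_cases h2 : (ξ, ξ) ∈ ρ
    · rw [if_pos (hiff2.mpr h2), if_pos h2]
    · rw [if_neg (fun h => h2 (hiff2.mp h)), if_neg h2]
      have hflip : ((π ξ).1, (π ξ).2 + 1) = π (ξ.1, ξ.2 + 1) := by
        rw [hπapp ξ, hπapp (ξ.1, ξ.2 + 1)]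
        exact Prod.ext rfl (by rw [fin2_add])
      have hiff3 : ((π ξ, ((π ξ).1, (π ξ).2 + 1)) ∈ ρ) ↔ (ξ, (ξ.1, ξ.2 + 1)) ∈ ρ := by
        rw [hflip]; exact hρ π hGπ hfixK ξ (ξ.1, ξ.2 + 1)
      by_cases h3 : (ξ, (ξ.1, ξ.2 + 1)) ∈ ρ
      · rw [if_pos (hiff3.mpr h3), if_pos h3, hflip]
      · rw [if_neg (fun h => h3 (hiff3.mp h)), if_neg h3]
        have hφa : φ a = a := by
          have h := hfix (a, 0) (Or.inr (by simp))
          rw [hπapp] at h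
          exact congrArg Prod.fst h
        have hfst : (π ξ).1 = φ ξ.1 := by rw [hπapp]
        have hiff4 : (π ξ).1 = a ↔ ξ.1 = a := by
          rw [hfst]
          exact ⟨fun h => φ.injective (by rw [h, hφa]), fun h => by rw [h, hφa]⟩
        by_cases h4 : ξ.1 = a
        · rw [if_pos (hiff4.mpr h4), if_pos h4, hfix (b, 0) (Or.inr (by simp))]
        · rw [if_neg (fun h => h4 (hiff4.mp h)), if_neg h4,
            hfix (a, 0) (Or.inr (by simp))]

/-- Combinatorial core of `Σ₂ ⊨ AC^{1,1}`: every symmetric relation `ρ` admits a symmetric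
choice relation `σ`. -/
theorem stmt_6 (K : Set ℕ) (hK : K.Finite) (ρ : Set ((ℕ × Fin 2) × (ℕ × Fin 2)))
    (hρ : SymmRel K ρ) :
    ∃ (K' : Set ℕ) (σ : Set ((ℕ × Fin 2) × (ℕ × Fin 2))), K'.Finite ∧ SymmRel K' σ ∧
      ∀ ξ : ℕ × Fin 2, (∃ η : ℕ × Fin 2, (ξ, η) ∈ ρ) →
        ∃! η : ℕ × Fin 2, (ξ, η) ∈ ρ ∧ (ξ, η) ∈ σ := by

  classical
  obtain ⟨a, ha⟩ := hK.infinite_compl.nonempty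
  obtain ⟨b, hb'⟩ := (hK.union (Set.finite_singleton a)).infinite_compl.nonempty
  have haK : a ∉ K := ha
  have hbK : b ∉ K := fun h => hb' (Or.inl h)
  have hba : b ≠ a := fun h => hb' (Or.inr h)
  have hab : a ≠ b := fun h => hba h.symm
  refine ⟨K ∪ {a, b}, {p | (∃ η, (p.1, η) ∈ ρ) ∧ p.2 = ch K ρ a b p.1}, ?_, ?_, ?_⟩
  · exact hK.union (Set.toFinite {a, b})
  · intro π hπ hfix ξ η
    have hfixK : FixesK π K := fun ζ h => hfix ζ (Or.inl h)
    simp only [Set.mem_setOf_eq]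
    constructor
    · rintro ⟨⟨η', hη'⟩, heq⟩
      refine ⟨⟨π.symm η', (hρ π hπ hfixK ξ (π.symm η')).mp
        (by rwa [Equiv.apply_symm_apply])⟩, ?_⟩
      rw [ch_equiv hρ π hπ hfix ξ] at heq
      exact π.injective heq
    · rintro ⟨⟨η', hη'⟩, heq⟩
      exact ⟨⟨π η', (hρ π hπ hfixK ξ η').mpr hη'⟩,
        by rw [ch_equiv hρ π hπ hfix ξ, heq]⟩
  · intro ξ hex
    refine ⟨ch K ρ a b ξ, ⟨ch_mem hρ haK hbK hab hex, ⟨hex, rfl⟩⟩, ?_⟩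
    rintro η ⟨-, -, h⟩
    exact h
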